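/- (Increment-to-gap ratio bound for Maurey's recursion.) Fix 0 < ε < 1/2 and let φ_n be Maurey's sequence on 𝕋^ℕ. Then for every n ≥ 2 and every w ∈ 𝕋^ℕ, |φ_n(w) − φ_{n−1}(w)| ≤ 2ε (1 − |φ_{n−1}(w)|)(1 − |φ_n(w)|). -/

import Mathlib

open MeasureTheory Function
open scoped ENNReal NNReal

noncomputable section

instance : Fact (0 < 2 * Real.pi) := ⟨by positivity⟩

/-- The circle `𝕋`, realized as the additive circle `ℝ / 2πℤ`. -/
abbrev Torus : Type := AddCircle (2 * Real.pi)

/-- The normalized Haar probability measure `m` on the circle `𝕋`. -/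
abbrev haarT : Measure Torus := AddCircle.haarAddCircle

/-- The canonical identification of `𝕋` with the unit circle in `ℂ`. -/
noncomputable def toC (ζ : Torus) : ℂ := (AddCircle.toCircle ζ : ℂ)

/-- `H¹₀(𝕋, X)`: Bochner-integrable `X`-valued functions on `𝕋` all of whose Fourier coefficients
`ĥ(n)`, `n ≤ 0`, vanish. -/
def MemH1Zero {X : Type} [NormedAddCommGroup X] [NormedSpace ℂ X] (h : Torus → X) : Prop :=
  Integrable h haarT ∧ ∀ n : ℤ, n ≤ 0 → fourierCoeff h n = 0

/-- The countable torus product `𝕋^ℕ`. -/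
abbrev TorusProd : Type := ℕ → Torus

/-- The normalized Haar probability measure `ℙ` on `𝕋^ℕ` (the product Haar measure). -/
noncomputable def haarTP : Measure TorusProd := MeasureTheory.Measure.addHaarMeasure ⊤

instance : IsProbabilityMeasure haarTP :=
  IsProbabilityMeasure.mk (MeasureTheory.Measure.addHaarMeasure_self (K₀ := ⊤))

/-- The filtration `(ℱ_n)` on `𝕋^ℕ` where `ℱ_n` is generated by the first `n` coordinates. -/
noncomputable def coordFiltration : Filtration ℕ (inferInstance : MeasurableSpace TorusProd) where
  seq n := MeasurableSpace.comap (fun w : TorusProd => fun i : Fin n => w i) inferInstance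
  mono' := by
    intro m n hmn
    have h : (fun w : TorusProd => fun i : Fin m => w i)
        = (fun (x : Fin n → Torus) (i : Fin m) => x (Fin.castLE hmn i))
            ∘ (fun w : TorusProd => fun i : Fin n => w i) := rfl
    simp only []
    rw [h, ← MeasurableSpace.comap_comp]
    exact MeasurableSpace.comap_mono
      ((measurable_pi_lambda _ fun i => measurable_pi_apply _).comap_le)
  le' := fun n => (measurable_pi_lambda _ fun i => measurable_pi_apply _).comap_le

/-- An `X`-valued Hardy martingale on `𝕋^ℕ`: a martingale `F` with respect to the coordinate
filtration with `F 0 = 0` such that for each `k ≥ 1` and almost every `w`, the function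
`y ↦ F_k(w_1, …, w_{k-1}, y) - F_{k-1}(w)` of the `k`-th coordinate belongs to `H¹₀(𝕋, X)`. -/
def IsHardyMartingale {X : Type} [NormedAddCommGroup X] [NormedSpace ℂ X] [CompleteSpace X]
    (F : ℕ → TorusProd → X) : Prop :=
  Martingale F coordFiltration haarTP ∧ F 0 = 0 ∧
  ∀ k : ℕ, 0 < k → ∀ᵐ w ∂haarTP,
    MemH1Zero (fun y : Torus => F k (Function.update w (k - 1) y) - F (k - 1) w)


/-- **Maurey's sequence** `φ_n` on `𝕋^ℕ`, defined recursively by `φ_0 = 0`,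
`φ_{n+1}(w) = φ_n(w) + ε (1 - |φ_n(w)|)² w_{n+1}` (coordinates indexed from `0`,
so that `φ_n` depends on the first `n` coordinates); in particular `φ_1(w) = ε w_1`. -/
noncomputable def maureySeq (ε : ℝ) : ℕ → TorusProd → ℂ
  | 0 => fun _ => 0
  | n + 1 => fun w =>
      maureySeq ε n w + (ε * (1 - ‖maureySeq ε n w‖) ^ 2) • toC (w n)

/-!
The increment `φ_n - φ_{n-1}` has modulus exactly `ε t²`, where `t = 1 - |φ_{n-1}|` is the
previous gap, so by the triangle inequality the new gap is at least `t (1 - ε t) ≥ t / 2`.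
This needs `0 ≤ t ≤ 1`, i.e. `|φ_k| < 1` for all `k`, which holds by induction because each step
adds at most `ε t² < t`.
-/

lemma sq_le_two_mul_mul_of_sub_le {ε t s : ℝ} (hε : 0 ≤ ε) (ht : 0 ≤ t) (hεt : ε * t ≤ 1 / 2)
    (hs : t - ε * t ^ 2 ≤ s) : ε * t ^ 2 ≤ 2 * ε * t * s := by
  have hts : t ≤ 2 * s := by nlinarith
  nlinarith [mul_le_mul_of_nonneg_left hts (mul_nonneg hε ht)]

lemma norm_toC (ζ : Torus) : ‖toC ζ‖ = 1 := Circle.norm_coe _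

lemma norm_maureySeq_succ_sub (ε : ℝ) (n : ℕ) (w : TorusProd) :
    ‖maureySeq ε (n + 1) w - maureySeq ε n w‖ = |ε| * (1 - ‖maureySeq ε n w‖) ^ 2 := by
  rw [maureySeq, add_sub_cancel_left, norm_smul, norm_toC, mul_one, Real.norm_eq_abs, abs_mul,
    abs_of_nonneg (sq_nonneg (1 - ‖maureySeq ε n w‖))]

lemma norm_maureySeq_succ_le (ε : ℝ) (n : ℕ) (w : TorusProd) :
    ‖maureySeq ε (n + 1) w‖ ≤ ‖maureySeq ε n w‖ + |ε| * (1 - ‖maureySeq ε n w‖) ^ 2 := by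
  rw [← norm_maureySeq_succ_sub]
  exact norm_le_norm_add_norm_sub' _ _

lemma norm_maureySeq_lt_one {ε : ℝ} (hε : |ε| < 1) (n : ℕ) (w : TorusProd) :
    ‖maureySeq ε n w‖ < 1 := by
  induction n with
  | zero => simp [maureySeq]
  | succ n ih =>
    have hgap : 0 < 1 - ‖maureySeq ε n w‖ := sub_pos.2 ih
    have hstep : |ε| * (1 - ‖maureySeq ε n w‖) ^ 2 < 1 - ‖maureySeq ε n w‖ := by
      have : |ε| * (1 - ‖maureySeq ε n w‖) < 1 := by
        nlinarith [abs_nonneg ε, norm_nonneg (maureySeq ε n w)]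
      nlinarith
    linarith [norm_maureySeq_succ_le ε n w]

/-- **Increment-to-gap ratio bound for Maurey's recursion.** For `0 < ε < 1/2` and `n ≥ 2`,
`|φ_n(w) - φ_{n-1}(w)| ≤ 2ε (1 - |φ_{n-1}(w)|)(1 - |φ_n(w)|)`. -/
theorem maurey_increment_to_gap_bound (ε : ℝ) (hε0 : 0 < ε) (hε : ε < 1 / 2) :
    ∀ n : ℕ, 2 ≤ n → ∀ w : TorusProd,
      ‖maureySeq ε n w - maureySeq ε (n - 1) w‖
        ≤ 2 * ε * ((1 - ‖maureySeq ε (n - 1) w‖)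
            * (1 - ‖maureySeq ε n w‖)) := by
  intro n hn w
  obtain ⟨m, rfl⟩ : ∃ m, n = m + 1 := ⟨n - 1, by omega⟩
  rw [Nat.add_sub_cancel, norm_maureySeq_succ_sub, abs_of_pos hε0, ← mul_assoc]
  have hε1 : |ε| < 1 := by rw [abs_of_pos hε0]; linarith
  have hgap : 0 ≤ 1 - ‖maureySeq ε m w‖ := sub_nonneg.2 (norm_maureySeq_lt_one hε1 m w).le
  refine sq_le_two_mul_mul_of_sub_le hε0.le hgap ?_ ?_
  · nlinarith [norm_nonneg (maureySeq ε m w)]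
  · have hstep := norm_maureySeq_succ_le ε m w
    rw [abs_of_pos hε0] at hstep
    linarith

end
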